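/- arXiv:0910.1507 — 4 statements merged into one kernel-verified Lean document; each statement's English description precedes it below -/
import Mathlib

section
/- Let σ be any natural L_ξ-spline on τ and let ψ ∈ C^p(ℝ) be such that ψ^(m) ∈ L²(ℝ) for all m ∈ {0, ..., p}. Then ∫_{−∞}^{∞} (d/dt − |ξ|)^p σ(t) · conj((d/dt − |ξ|)^p ψ(t)) dt = Σ_{m=0}^{p} binom(p, m) |ξ|^{2(p−m)} ∫_{−∞}^{∞} σ^(m)(t) · conj(ψ^(m)(t)) dt, where binom(p, m) = p!/(m!(p−m)!). -/
open MeasureTheory Finset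

noncomputable section

/-- The first-order operator `d/dt - c` acting on functions `ℝ → ℂ`. -/
def DOp (c : ℝ) (f : ℝ → ℂ) : ℝ → ℂ := fun t => deriv f t - (c : ℂ) * f t

/-- The iterated operator `(d/dt - c)^k`. -/
def DIter (c : ℝ) (k : ℕ) (f : ℝ → ℂ) : ℝ → ℂ := (DOp c)^[k] f

/-- The second-order operator `d²/dt² - c²` acting on functions `ℝ → ℂ`. -/
def LOp (c : ℝ) (f : ℝ → ℂ) : ℝ → ℂ := fun t => iteratedDeriv 2 f t - ((c : ℂ)) ^ 2 * f t

/-- The operator `L_ξ = (d²/dt² - c²)^p` with `c = |ξ|`. -/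
def LIter (c : ℝ) (p : ℕ) (f : ℝ → ℂ) : ℝ → ℂ := (LOp c)^[p] f

/-- `s : ℝ → ℂ` is a natural `L_ξ`-spline on the knots `τ 0 < τ 1 < ... < τ N`
(with `c = |ξ|`): (i) `s ∈ C^{2p-2}(ℝ)`; (ii) `L_ξ s = 0` on every open interval
between consecutive knots, as well as on `(-∞, τ 0)` and `(τ N, ∞)`;
(iii) `(d/dt - |ξ|)^p s = 0` on `(-∞, τ 0)` and `(d/dt + |ξ|)^p s = 0` on `(τ N, ∞)`. -/
def IsNaturalLSpline (p N : ℕ) (c : ℝ) (τ : Fin (N + 1) → ℝ) (s : ℝ → ℂ) : Prop :=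
  ContDiff ℝ (2 * p - 2 : ℕ) s ∧
  (∀ j : Fin N, ∀ x ∈ Set.Ioo (τ j.castSucc) (τ j.succ), LIter c p s x = 0) ∧
  (∀ x ∈ Set.Iio (τ 0), LIter c p s x = 0) ∧
  (∀ x ∈ Set.Ioi (τ (Fin.last N)), LIter c p s x = 0) ∧
  (∀ x ∈ Set.Iio (τ 0), DIter c p s x = 0) ∧
  (∀ x ∈ Set.Ioi (τ (Fin.last N)), DIter (-c) p s x = 0)

/-! Write `D = d/dt - c`. One integration by parts gives
`∫ Du · conj (Dv) = ∫ u' · conj v' + c² ∫ u · conj v`: the cross terms cancel because `c` is real.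
Since `D^(k+1) f = D^k (D f)` and `(D f)^(m) = D (f^(m))`, applying this to `u = f^(m)`,
`v = g^(m)` and inducting on `k` produces the binomial coefficients through Pascal's rule.

The integrations by parts need `σ^(m) ∈ L²`. Near `+∞` a natural spline satisfies
`(d/dt + c)^p σ = 0`, and an estimate `(d/dt + c) w = O(e^{-εt})` with `ε < c` propagates to
`w = O(e^{-εt})` (fence `e^{ct} w`, whose derivative is `e^{ct} (w' + c w) = O(e^{(c-ε)t})`).
Descending through the powers of `d/dt + c`, every `σ^(m)` decays exponentially at `+∞`, and by
reflection also at `-∞`. -/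

open Asymptotics Filter
open scoped ENNReal

theorem DIter_succ' (c : ℝ) (k : ℕ) (f : ℝ → ℂ) : DIter c (k + 1) f = DIter c k (DOp c f) :=
  Function.iterate_succ_apply _ _ _

theorem DIter_succ (c : ℝ) (k : ℕ) (f : ℝ → ℂ) : DIter c (k + 1) f = DOp c (DIter c k f) :=
  Function.iterate_succ_apply' _ _ _

theorem contDiff_DOp (c : ℝ) {n : ℕ} {f : ℝ → ℂ} (hf : ContDiff ℝ (n + 1) f) :
    ContDiff ℝ n (DOp c f) :=
  hf.deriv'.sub (contDiff_const.mul (hf.of_le (by norm_cast; omega)))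

theorem contDiff_DIter (c : ℝ) {n j : ℕ} {f : ℝ → ℂ} (hf : ContDiff ℝ (n + j : ℕ) f) :
    ContDiff ℝ n (DIter c j f) := by
  induction j generalizing f with
  | zero => simpa [DIter] using hf
  | succ j ih =>
    rw [DIter_succ']
    exact ih (contDiff_DOp c (by simpa [← add_assoc] using hf))

theorem iteratedDeriv_DOp (c : ℝ) {m : ℕ} {f : ℝ → ℂ} (hf : ContDiff ℝ (m + 1) f) (t : ℝ) :
    iteratedDeriv m (DOp c f) t = iteratedDeriv (m + 1) f t - c * iteratedDeriv m f t := by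
  change iteratedDeriv m (fun t => deriv f t - (c : ℂ) * f t) t = _
  rw [iteratedDeriv_fun_sub hf.deriv'.contDiffAt
      (contDiff_const.mul (hf.of_le (by norm_cast; omega))).contDiffAt,
    iteratedDeriv_const_mul_field, iteratedDeriv_succ']

theorem Finset.sum_range_choose_succ_mul_pow {R : Type*} [CommSemiring R] (x : R) (h : ℕ → R)
    (k : ℕ) :
    ∑ m ∈ range (k + 2), ((k + 1).choose m : R) * x ^ (k + 1 - m) * h m
      = ∑ m ∈ range (k + 1), (k.choose m : R) * x ^ (k - m) * (h (m + 1) + x * h m) := by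
  have := Finset.sum_choose_succ_mul (fun i j => x ^ j * h i) k
  simp only [← mul_assoc] at this
  rw [this, add_comm, ← Finset.sum_add_distrib]
  refine Finset.sum_congr rfl fun m hm => ?_
  rw [show k + 1 - m = k - m + 1 by have := Finset.mem_range.1 hm; omega]
  ring

theorem integrable_mul_conj_of_memLp_two {α : Type*} [MeasurableSpace α] {μ : Measure α}
    {u v : α → ℂ} (hu : MemLp u 2 μ) (hv : MemLp v 2 μ) :
    Integrable (fun t => u t * starRingEnd ℂ (v t)) μ :=
  hu.integrable_mul (q := 2) hv.star

theorem integral_DOp_mul_conj_DOp (c : ℝ) {u v : ℝ → ℂ} (hu : Differentiable ℝ u)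
    (hv : Differentiable ℝ v) (hu₂ : MemLp u 2) (hu₂' : MemLp (deriv u) 2) (hv₂ : MemLp v 2)
    (hv₂' : MemLp (deriv v) 2) :
    ∫ t, DOp c u t * starRingEnd ℂ (DOp c v t)
      = (∫ t, deriv u t * starRingEnd ℂ (deriv v t)) + c ^ 2 * ∫ t, u t * starRingEnd ℂ (v t) := by
  have i₁ := integrable_mul_conj_of_memLp_two hu₂' hv₂'
  have i₂ := integrable_mul_conj_of_memLp_two hu₂ hv₂
  have i₃ := integrable_mul_conj_of_memLp_two hu₂ hv₂'
  have i₄ := integrable_mul_conj_of_memLp_two hu₂' hv₂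
  have parts : ∫ t, u t * starRingEnd ℂ (deriv v t) = -∫ t, deriv u t * starRingEnd ℂ (v t) :=
    integral_mul_deriv_eq_deriv_mul_of_integrable (fun t _ => (hu t).hasDerivAt)
      (fun t _ => (hv t).hasDerivAt.star) i₃ i₄ i₂
  have expand : ∀ t, DOp c u t * starRingEnd ℂ (DOp c v t)
      = deriv u t * starRingEnd ℂ (deriv v t) + c ^ 2 * (u t * starRingEnd ℂ (v t))
        - c * (u t * starRingEnd ℂ (deriv v t) + deriv u t * starRingEnd ℂ (v t)) := by
    intro t
    simp only [DOp, map_sub, map_mul, Complex.conj_ofReal]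
    ring
  simp_rw [expand]
  rw [integral_sub (i₁.fun_add (i₂.const_mul _)) ((i₃.fun_add i₄).const_mul _),
    integral_add i₁ (i₂.const_mul _), integral_const_mul, integral_const_mul, integral_add i₃ i₄,
    parts]
  ring

theorem memLp_iteratedDeriv_DOp (c : ℝ) {q : ℝ≥0∞} {μ : Measure ℝ} {k : ℕ} {f : ℝ → ℂ}
    (hf : ContDiff ℝ (k + 1) f) (hfq : ∀ m ≤ k + 1, MemLp (iteratedDeriv m f) q μ) :
    ∀ m ≤ k, MemLp (iteratedDeriv m (DOp c f)) q μ := by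
  intro m hm
  rw [funext (iteratedDeriv_DOp c (hf.of_le (by exact_mod_cast (by omega : m + 1 ≤ k + 1))))]
  exact (hfq (m + 1) (by omega)).sub ((hfq m (by omega)).const_mul _)

theorem integral_DIter_mul_conj_DIter (c : ℝ) {k : ℕ} {f g : ℝ → ℂ} (hf : ContDiff ℝ k f)
    (hg : ContDiff ℝ k g) (hf₂ : ∀ m ≤ k, MemLp (iteratedDeriv m f) 2)
    (hg₂ : ∀ m ≤ k, MemLp (iteratedDeriv m g) 2) :
    ∫ t, DIter c k f t * starRingEnd ℂ (DIter c k g t)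
      = ∑ m ∈ Finset.range (k + 1), (k.choose m : ℂ) * (c : ℂ) ^ (2 * (k - m)) *
          ∫ t, iteratedDeriv m f t * starRingEnd ℂ (iteratedDeriv m g t) := by
  induction k generalizing f g with
  | zero => simp [DIter]
  | succ k ih =>
    have step : ∀ m ≤ k,
        ∫ t, iteratedDeriv m (DOp c f) t * starRingEnd ℂ (iteratedDeriv m (DOp c g) t)
          = (∫ t, iteratedDeriv (m + 1) f t * starRingEnd ℂ (iteratedDeriv (m + 1) g t))
            + c ^ 2 * ∫ t, iteratedDeriv m f t * starRingEnd ℂ (iteratedDeriv m g t) := by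
      intro m hm
      have hmk : (m : WithTop ℕ∞) < k + 1 := by exact_mod_cast (by omega : m < k + 1)
      have hmk' : (m + 1 : WithTop ℕ∞) ≤ k + 1 := by exact_mod_cast (by omega : m + 1 ≤ k + 1)
      have := integral_DOp_mul_conj_DOp c (hf.differentiable_iteratedDeriv m hmk)
        (hg.differentiable_iteratedDeriv m hmk) (hf₂ m (by omega))
        (by rw [← iteratedDeriv_succ]; exact hf₂ (m + 1) (by omega)) (hg₂ m (by omega))
        (by rw [← iteratedDeriv_succ]; exact hg₂ (m + 1) (by omega))
      simp only [DOp, ← iteratedDeriv_succ] at this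
      simp_rw [iteratedDeriv_DOp c (hf.of_le hmk'), iteratedDeriv_DOp c (hg.of_le hmk')]
      exact this
    rw [DIter_succ', DIter_succ', ih (contDiff_DOp c hf) (contDiff_DOp c hg)
      (memLp_iteratedDeriv_DOp c hf hf₂) (memLp_iteratedDeriv_DOp c hg hg₂)]
    simp_rw [pow_mul]
    rw [Finset.sum_range_choose_succ_mul_pow]
    exact Finset.sum_congr rfl fun m hm => by rw [step m (Finset.mem_range_succ_iff.1 hm)]

theorem hasDerivAt_exp_mul_smul (c : ℝ) {w : ℝ → ℂ} {t : ℝ} (hw : DifferentiableAt ℝ w t) :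
    HasDerivAt (fun s => Real.exp (c * s) • w s) (Real.exp (c * t) • DOp (-c) w t) t := by
  refine (((hasDerivAt_id t).const_mul c).exp.smul hw.hasDerivAt).congr_deriv ?_
  simp only [DOp, id, mul_one, Complex.real_smul]
  push_cast
  ring

theorem isBigO_atTop_of_DOp_neg {c ε : ℝ} (hεc : ε < c) {w : ℝ → ℂ} (hw : Differentiable ℝ w)
    (h : DOp (-c) w =O[atTop] fun t => Real.exp (-ε * t)) :
    w =O[atTop] fun t => Real.exp (-ε * t) := by
  obtain ⟨C, hC, hCw⟩ := h.exists_nonneg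
  obtain ⟨b, hb⟩ := eventually_atTop.1 hCw.bound
  set g : ℝ → ℂ := fun t => Real.exp (c * t) • w t
  have hg : ∀ t, HasDerivAt g (Real.exp (c * t) • DOp (-c) w t) t :=
    fun t => hasDerivAt_exp_mul_smul c (hw t)
  set B : ℝ → ℝ := fun t => ‖g b‖ + C / (c - ε) * Real.exp ((c - ε) * t)
  have hB : ∀ t, HasDerivAt B (C * Real.exp ((c - ε) * t)) t := by
    intro t
    refine ((((hasDerivAt_id t).const_mul (c - ε)).exp.const_mul (C / (c - ε))).const_add
      ‖g b‖).congr_deriv ?_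
    field_simp [(sub_pos.2 hεc).ne']
    simp
  have hgB : ∀ t ≥ b, ‖g t‖ ≤ B t := by
    intro t ht
    refine image_norm_le_of_norm_deriv_right_le_deriv_boundary
      (fun x _ => (hg x).continuousAt.continuousWithinAt) (fun x _ => (hg x).hasDerivWithinAt)
      (show ‖g b‖ ≤ B b from le_add_of_nonneg_right
        (mul_nonneg (div_nonneg hC (sub_pos.2 hεc).le) (Real.exp_pos _).le))
      hB (fun x hx => ?_) ⟨ht, le_rfl⟩
    rw [norm_smul, Real.norm_of_nonneg (Real.exp_pos _).le]
    calc Real.exp (c * x) * ‖DOp (-c) w x‖ ≤ Real.exp (c * x) * (C * ‖Real.exp (-ε * x)‖) :=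
          mul_le_mul_of_nonneg_left (hb x hx.1) (Real.exp_pos _).le
      _ = C * Real.exp ((c - ε) * x) := by
          rw [Real.norm_of_nonneg (Real.exp_pos _).le, mul_left_comm, ← Real.exp_add]
          ring_nf
  refine IsBigO.of_bound (‖g b‖ * Real.exp (-(c - ε) * b) + C / (c - ε)) ?_
  filter_upwards [eventually_ge_atTop b] with t ht
  have hw_eq : ‖w t‖ = Real.exp (-c * t) * ‖g t‖ := by
    rw [norm_smul, Real.norm_of_nonneg (Real.exp_pos _).le, ← mul_assoc, ← Real.exp_add]
    simp
  have decay : Real.exp (-c * t) ≤ Real.exp (-(c - ε) * b) * Real.exp (-ε * t) := by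
    rw [← Real.exp_add]
    exact Real.exp_le_exp.2 (by nlinarith)
  rw [hw_eq, Real.norm_of_nonneg (Real.exp_pos _).le]
  calc Real.exp (-c * t) * ‖g t‖ ≤ Real.exp (-c * t) * B t :=
        mul_le_mul_of_nonneg_left (hgB t ht) (Real.exp_pos _).le
    _ = ‖g b‖ * Real.exp (-c * t) + C / (c - ε) * Real.exp (-ε * t) := by
        rw [show -ε * t = -c * t + (c - ε) * t by ring, Real.exp_add]
        ring
    _ ≤ ‖g b‖ * (Real.exp (-(c - ε) * b) * Real.exp (-ε * t))
          + C / (c - ε) * Real.exp (-ε * t) := by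
        gcongr
    _ = _ := by ring

theorem isBigO_atBot_of_DOp {c ε : ℝ} (hεc : ε < c) {w : ℝ → ℂ} (hw : Differentiable ℝ w)
    (h : DOp c w =O[atBot] fun t => Real.exp (ε * t)) :
    w =O[atBot] fun t => Real.exp (ε * t) := by
  have reflect : DOp (-c) (fun t => w (-t)) = fun t => -DOp c w (-t) := by
    funext t
    simp only [DOp, deriv_comp_neg]
    push_cast
    ring
  have hreflect : DOp (-c) (fun t => w (-t)) =O[atTop] fun t => Real.exp (-ε * t) := by
    rw [reflect]
    simpa [Function.comp_def] using (h.comp_tendsto tendsto_neg_atTop_atBot).neg_left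
  simpa [Function.comp_def] using
    (isBigO_atTop_of_DOp_neg hεc (hw.comp differentiable_neg) hreflect).comp_tendsto
      tendsto_neg_atBot_atTop

theorem isBigO_iteratedDeriv_of_DIter {l : Filter ℝ} {c : ℝ} {E : ℝ → ℝ}
    (htail : ∀ w : ℝ → ℂ, Differentiable ℝ w → DOp c w =O[l] E → w =O[l] E)
    {k : ℕ} {f : ℝ → ℂ} (hf : ContDiff ℝ k f) (hk : DIter c k f =O[l] E) {m : ℕ} (hm : m ≤ k) :
    iteratedDeriv m f =O[l] E := by
  have smooth : ∀ j ≤ k, ContDiff ℝ (k - j : ℕ) (DIter c j f) :=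
    fun j hj => contDiff_DIter c (by rwa [Nat.sub_add_cancel hj])
  have hDIter : ∀ i ≤ k, DIter c (k - i) f =O[l] E := by
    intro i hi
    induction i with
    | zero => simpa using hk
    | succ i ih =>
      refine htail _ ((smooth _ (by omega)).differentiable (by norm_cast; omega)) ?_
      rw [← DIter_succ, show k - (i + 1) + 1 = k - i by omega]
      exact ih (by omega)
  have hderiv : ∀ m j, j + m ≤ k → iteratedDeriv m (DIter c j f) =O[l] E := by
    intro m
    induction m with
    | zero =>
      intro j hj
      simpa [show k - (k - j) = j by omega] using hDIter (k - j) (by omega)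
    | succ m ih =>
      intro j hj
      have hm : ContDiff ℝ (m + 1) (DIter c j f) :=
        (smooth j (by omega)).of_le (by exact_mod_cast (by omega : m + 1 ≤ k - j))
      have expand : iteratedDeriv (m + 1) (DIter c j f)
          = fun t =>
            iteratedDeriv m (DIter c (j + 1) f) t + c * iteratedDeriv m (DIter c j f) t := by
        funext t
        rw [DIter_succ, iteratedDeriv_DOp c hm]
        ring
      rw [expand]
      exact (ih (j + 1) (by omega)).add ((ih j (by omega)).const_mul_left _)
  simpa [DIter] using hderiv m 0 (by omega)

theorem memLp_two_of_isBigO_exp {f : ℝ → ℂ} (hf : Continuous f) {ε : ℝ} (hε : 0 < ε)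
    (hbot : f =O[atBot] fun t => Real.exp (ε * t))
    (htop : f =O[atTop] fun t => Real.exp (-ε * t)) : MemLp f 2 := by
  have sq : ∀ a t : ℝ, Real.exp (a * t) ^ 2 = Real.exp (2 * a * t) := fun a t => by
    rw [← Real.exp_nat_mul]
    ring_nf
  rw [memLp_two_iff_integrable_sq_norm hf.aestronglyMeasurable]
  refine (hf.norm.pow 2).locallyIntegrable.integrable_of_isBigO_atBot_atTop
    (hbot.norm_left.pow 2) ⟨Set.Iic 0, Iic_mem_atBot 0, ?_⟩
    (htop.norm_left.pow 2) ⟨Set.Ioi 0, Ioi_mem_atTop 0, ?_⟩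
  · simpa only [sq] using integrableOn_exp_mul_Iic (by positivity : 0 < 2 * ε) 0
  · simpa only [sq] using integrableOn_exp_mul_Ioi (by linarith : 2 * -ε < 0) 0

theorem memLp_iteratedDeriv_of_DIter_eventuallyEq_zero {c : ℝ} (hc : 0 < c) {k : ℕ} {f : ℝ → ℂ}
    (hf : ContDiff ℝ k f) (hbot : DIter c k f =ᶠ[atBot] 0) (htop : DIter (-c) k f =ᶠ[atTop] 0)
    {m : ℕ} (hm : m ≤ k) : MemLp (iteratedDeriv m f) 2 :=
  memLp_two_of_isBigO_exp (hf.continuous_iteratedDeriv m (by exact_mod_cast hm)) (half_pos hc)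
    (isBigO_iteratedDeriv_of_DIter (fun _ hw => isBigO_atBot_of_DOp (half_lt_self hc) hw) hf
      (hbot.trans_isBigO (isBigO_zero _ _)) hm)
    (isBigO_iteratedDeriv_of_DIter (fun _ hw => isBigO_atTop_of_DOp_neg (half_lt_self hc) hw) hf
      (htop.trans_isBigO (isBigO_zero _ _)) hm)

theorem fundamental_integral_binomial_expansion_general
    (n p N : ℕ) (hp : 2 ≤ p)
    (ξ : EuclideanSpace ℝ (Fin n)) (hξ : ξ ≠ 0)
    (τ : Fin (N + 1) → ℝ)
    (σ : ℝ → ℂ) (hσ : IsNaturalLSpline p N ‖ξ‖ τ σ)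
    (ψ : ℝ → ℂ) (hψ : ContDiff ℝ (p : ℕ) ψ)
    (hψL2 : ∀ m ≤ p, MemLp (iteratedDeriv m ψ) 2 volume) :
    ∫ t : ℝ, DIter ‖ξ‖ p σ t * (starRingEnd ℂ) (DIter ‖ξ‖ p ψ t)
      = ∑ m ∈ Finset.range (p + 1), (p.choose m : ℂ) * (‖ξ‖ : ℂ) ^ (2 * (p - m)) *
          ∫ t : ℝ, iteratedDeriv m σ t * (starRingEnd ℂ) (iteratedDeriv m ψ t) := by
  obtain ⟨hσ_smooth, -, -, -, hσ_left, hσ_right⟩ := hσ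
  have hσp : ContDiff ℝ p σ := hσ_smooth.of_le (by exact_mod_cast (by omega : p ≤ 2 * p - 2))
  have hσL2 : ∀ m ≤ p, MemLp (iteratedDeriv m σ) 2 := fun m hm =>
    memLp_iteratedDeriv_of_DIter_eventuallyEq_zero (norm_pos_iff.2 hξ) hσp
      (eventually_of_mem (Iio_mem_atBot _) hσ_left)
      (eventually_of_mem (Ioi_mem_atTop _) hσ_right) hm
  exact integral_DIter_mul_conj_DIter ‖ξ‖ hσp hψ hσL2 hψL2

/-- **Lemma (Binomial expansion identity for the fundamental integral).**
Let `σ` be any natural `L_ξ`-spline on `τ` and let `ψ ∈ C^p(ℝ)` with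
`ψ^(m) ∈ L²(ℝ)` for all `m ∈ {0, ..., p}`. Then
`∫ (d/dt - |ξ|)^p σ ⋅ conj((d/dt - |ξ|)^p ψ)
  = Σ_{m=0}^{p} C(p,m) |ξ|^{2(p-m)} ∫ σ^(m) ⋅ conj(ψ^(m))`. -/
theorem fundamental_integral_binomial_expansion
    (n p N : ℕ) (hp : 2 ≤ p) (hN : p ≤ N + 1)
    (ξ : EuclideanSpace ℝ (Fin n)) (hξ : ξ ≠ 0)
    (τ : Fin (N + 1) → ℝ) (hτ : StrictMono τ)
    (σ : ℝ → ℂ) (hσ : IsNaturalLSpline p N ‖ξ‖ τ σ)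
    (ψ : ℝ → ℂ) (hψ : ContDiff ℝ (p : ℕ) ψ)
    (hψL2 : ∀ m ≤ p, MemLp (iteratedDeriv m ψ) 2 volume) :
    ∫ t : ℝ, DIter ‖ξ‖ p σ t * (starRingEnd ℂ) (DIter ‖ξ‖ p ψ t)
      = ∑ m ∈ Finset.range (p + 1), (p.choose m : ℂ) * (‖ξ‖ : ℂ) ^ (2 * (p - m)) *
          ∫ t : ℝ, iteratedDeriv m σ t * (starRingEnd ℂ) (iteratedDeriv m ψ t) :=
  fundamental_integral_binomial_expansion_general n p N hp ξ hξ τ σ hσ ψ hψ hψL2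
end
end

section
/- For each nonzero ξ ∈ ℝ^n and integer p ≥ 2, the function φ_ξ(t) := ((−1)^p / (γ_p |ξ|^{2p−1})) e^{−|ξ||t|} Σ_{l=0}^{p−1} c_l |ξ|^l |t|^l, where c_l = (2p−2−l)! 2^l / (l!(p−1−l)!) and γ_p = (p−1)! 2^{2p−1}, is integrable on ℝ and its Fourier transform satisfies ∫_ℝ e^{−itu} φ_ξ(t) dt = (−1)^p / (u² + |ξ|²)^p for all u ∈ ℝ; equivalently, φ_ξ is the unique integrable fundamental solution of the operator L_ξ = (d²/dt² − |ξ|²)^p, i.e. L_ξ φ_ξ = δ_0 in the sense of distributions. -/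
open MeasureTheory Finset

noncomputable section

/-- The coefficients `c_l = (2p-2-l)! 2^l / (l! (p-1-l)!)`. -/
def cCoef (p l : ℕ) : ℝ :=
  ((2 * p - 2 - l).factorial : ℝ) * 2 ^ l / ((l.factorial : ℝ) * ((p - 1 - l).factorial : ℝ))

/-- The constant `γ_p = (p-1)! 2^{2p-1}`. -/
def gammaP (p : ℕ) : ℝ := ((p - 1).factorial : ℝ) * 2 ^ (2 * p - 1)

/-- The normalized kernel `φ̃_ξ(t) = e^{-|ξ||t|} Σ_{l=0}^{p-1} c_l |ξ|^l |t|^l` (with `c = |ξ|`). -/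
def phiTilde (p : ℕ) (c : ℝ) (t : ℝ) : ℝ :=
  Real.exp (-(c * |t|)) * ∑ l ∈ Finset.range p, cCoef p l * c ^ l * |t| ^ l

/-- The fundamental solution `φ_ξ(t) = ((-1)^p / (γ_p |ξ|^{2p-1})) φ̃_ξ(t)` of `L_ξ`. -/
def phiXi (p : ℕ) (c : ℝ) (t : ℝ) : ℂ :=
  (((-1 : ℝ) ^ p / (gammaP p * c ^ (2 * p - 1)) * phiTilde p c t : ℝ) : ℂ)

open Filter Set
open scoped Topology Nat

/-!
On each half-line, `e^{-itu} e^{-c|t|} |t|^l` is `t^l e^{-st}` with `s = c ± iu`, whose integral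
is `l! / s^{l+1}`; so the Fourier transform of `φ_ξ` (with `c = |ξ|`) is an explicit combination of
the `l! / (c ± iu)^{l+1}`. That this combination equals `(-1)^p / (u² + c²)^p` is a partial fraction
identity. With `p = q + 1`, `x = (c + iu) / 2c` and `y = (c - iu) / 2c`, so that `x + y = 1`, it
becomes the "problem of points" identity
`∑_{k ≤ q} C(q+k, k) (x^{q+1} y^k + y^{q+1} x^k) = 1`,
which follows by induction on `q` from a recurrence for the truncations of `(1 - y)^{-(q+1)}`.
-/

section TruncInvOneSubPow

variable {R : Type*} [CommRing R]

/-- The Taylor polynomial of degree `q` of `(1 - y)⁻¹ ^ (q + 1)`. -/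
def truncInvOneSubPow (q : ℕ) (y : R) : R :=
  ∑ k ∈ range (q + 1), ((q + k).choose k : R) * y ^ k

lemma one_sub_mul_truncInvOneSubPow_succ (q : ℕ) (y : R) :
    (1 - y) * truncInvOneSubPow (q + 1) y
      = truncInvOneSubPow q y + ((2 * q + 1).choose (q + 1) : R) * y ^ (q + 1) * (1 - 2 * y) := by
  have hpascal : truncInvOneSubPow (q + 1) y
      = 1 + y * ∑ k ∈ range (q + 1), ((q + 1 + k).choose k : R) * y ^ k
        + ∑ k ∈ range (q + 1), ((q + (k + 1)).choose (k + 1) : R) * y ^ (k + 1) := by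
    rw [truncInvOneSubPow, sum_range_succ', mul_sum, add_assoc (1 : R), ← sum_add_distrib,
      add_comm (1 : R)]
    congr 1
    · refine sum_congr rfl fun k _ => ?_
      rw [show q + 1 + (k + 1) = q + 1 + k + 1 by ring, Nat.choose_succ_succ',
        show q + (k + 1) = q + 1 + k by ring]
      push_cast
      ring
    · simp
  have hlast : truncInvOneSubPow (q + 1) y
      = ∑ k ∈ range (q + 1), ((q + 1 + k).choose k : R) * y ^ k
        + 2 * ((2 * q + 1).choose (q + 1) : R) * y ^ (q + 1) := by
    rw [truncInvOneSubPow, sum_range_succ, show q + 1 + (q + 1) = 2 * q + 1 + 1 by ring,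
      Nat.choose_succ_succ', Nat.choose_symm_half]
    push_cast
    ring
  have hshift : truncInvOneSubPow q y + ((2 * q + 1).choose (q + 1) : R) * y ^ (q + 1)
      = 1 + ∑ k ∈ range (q + 1), ((q + (k + 1)).choose (k + 1) : R) * y ^ (k + 1) := by
    rw [truncInvOneSubPow, show 2 * q + 1 = q + (q + 1) by ring,
      ← sum_range_succ (fun k => ((q + k).choose k : R) * y ^ k), sum_range_succ', add_comm]
    simp
  linear_combination hpascal - y * hlast - hshift

theorem pow_mul_truncInvOneSubPow_add_pow_mul_truncInvOneSubPow {x y : R} (h : x + y = 1)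
    (q : ℕ) : x ^ (q + 1) * truncInvOneSubPow q y + y ^ (q + 1) * truncInvOneSubPow q x = 1 := by
  obtain rfl : x = 1 - y := eq_sub_of_add_eq h
  induction q with
  | zero => simp [truncInvOneSubPow]
  | succ q ih =>
    linear_combination (1 - y) ^ (q + 1) * one_sub_mul_truncInvOneSubPow_succ q y
      + y ^ (q + 1) * one_sub_mul_truncInvOneSubPow_succ q (1 - y) + ih

end TruncInvOneSubPow

lemma cCoef_add_add_one (m k : ℕ) :
    cCoef (m + k + 1) m = ((m + k + k)! : ℝ) * 2 ^ m / (m ! * k !) := by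
  rw [cCoef, show 2 * (m + k + 1) - 2 - m = m + k + k by omega, show m + k + 1 - 1 - m = k by omega]

lemma gammaP_add_one (q : ℕ) : gammaP (q + 1) = (q ! : ℝ) * 2 ^ (2 * q + 1) := by
  rw [gammaP, Nat.add_sub_cancel, show 2 * (q + 1) - 1 = 2 * q + 1 by omega]

theorem sum_cCoef_mul_factorial_div_pow_add {a b c : ℂ} (ha : a ≠ 0) (hb : b ≠ 0) (hc : c ≠ 0)
    (habc : a + b = 2 * c) (q : ℕ) :
    ∑ l ∈ range (q + 1), (cCoef (q + 1) l : ℂ) * c ^ l * (l ! / a ^ (l + 1) + l ! / b ^ (l + 1))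
      = gammaP (q + 1) * c ^ (2 * q + 1) / (a * b) ^ (q + 1) := by
  have hxy : a / (2 * c) + b / (2 * c) = 1 := by
    rw [← add_div, habc, div_self (mul_ne_zero two_ne_zero hc)]
  have key := pow_mul_truncInvOneSubPow_add_pow_mul_truncInvOneSubPow hxy q
  rw [truncInvOneSubPow, truncInvOneSubPow, mul_sum, mul_sum, ← sum_add_distrib] at key
  -- the term `l = q - k` is `gammaP (q + 1) * c ^ (2 * q + 1) / (a * b) ^ (q + 1)` times the
  -- `k`-th term of `key`
  rw [← sum_range_reflect, ← mul_one (_ / _), ← key, mul_sum]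
  refine sum_congr rfl fun k hk => ?_
  obtain ⟨m, rfl⟩ : ∃ m, q = k + m := ⟨q - k, by have := mem_range.mp hk; omega⟩
  rw [show k + m + 1 - 1 - k = m by omega, show k + m = m + k by ring, cCoef_add_add_one,
    gammaP_add_one, ← Nat.add_choose_mul_factorial_mul_factorial (m + k) k]
  have hk : (k ! : ℂ) ≠ 0 := Nat.cast_ne_zero.mpr k.factorial_ne_zero
  have hm : (m ! : ℂ) ≠ 0 := Nat.cast_ne_zero.mpr m.factorial_ne_zero
  push_cast
  simp only [div_pow]
  field_simp
  ring

section LaplaceMonomial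

variable {s : ℂ}

lemma norm_ofReal_pow_mul_cexp_neg_mul {t : ℝ} (ht : 0 ≤ t) (l : ℕ) :
    ‖(t : ℂ) ^ l * Complex.exp (-(s * t))‖ = t ^ l * Real.exp (-s.re * t) := by
  simp [Complex.norm_exp, abs_of_nonneg ht]

lemma tendsto_ofReal_pow_mul_cexp_neg_mul_atTop (hs : 0 < s.re) (l : ℕ) :
    Tendsto (fun t : ℝ => (t : ℂ) ^ l * Complex.exp (-(s * t))) atTop (𝓝 0) := by
  rw [tendsto_zero_iff_norm_tendsto_zero]
  refine (tendsto_rpow_mul_exp_neg_mul_atTop_nhds_zero l s.re hs).congr' ?_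
  filter_upwards [eventually_ge_atTop 0] with t ht
  rw [norm_ofReal_pow_mul_cexp_neg_mul ht, Real.rpow_natCast]

lemma integrableOn_ofReal_pow_mul_cexp_neg_mul_Ioi (hs : 0 < s.re) (l : ℕ) :
    IntegrableOn (fun t : ℝ => (t : ℂ) ^ l * Complex.exp (-(s * t))) (Ioi (0 : ℝ)) := by
  refine Integrable.mono' (integrableOn_rpow_mul_exp_neg_mul_rpow (s := l)
    (neg_one_lt_zero.trans_le l.cast_nonneg) one_pos hs) (by fun_prop) ?_
  filter_upwards [ae_restrict_mem measurableSet_Ioi] with t ht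
  rw [norm_ofReal_pow_mul_cexp_neg_mul (le_of_lt ht), Real.rpow_natCast, Real.rpow_one]

theorem integral_ofReal_pow_mul_cexp_neg_mul_Ioi (hs : 0 < s.re) (l : ℕ) :
    ∫ t in Ioi (0 : ℝ), (t : ℂ) ^ l * Complex.exp (-(s * t)) = l ! / s ^ (l + 1) := by
  have hs₀ : s ≠ 0 := by rintro rfl; simp at hs
  induction l with
  | zero =>
    simpa [neg_mul, div_neg, neg_div] using integral_exp_mul_complex_Ioi (a := -s) (by simpa) 0
  | succ l ih =>
    have hderiv : ∀ t ∈ Ici (0 : ℝ),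
        HasDerivAt (fun t : ℝ => -((t : ℂ) ^ (l + 1) * Complex.exp (-(s * t))) / s)
          ((t : ℂ) ^ (l + 1) * Complex.exp (-(s * t))
            - (l + 1) / s * ((t : ℂ) ^ l * Complex.exp (-(s * t)))) t := by
      intro t _
      have hpow : HasDerivAt (fun t : ℝ => (t : ℂ) ^ (l + 1)) ((l + 1) * (t : ℂ) ^ l) t := by
        simpa using (hasDerivAt_pow (l + 1) (t : ℂ)).comp_ofReal
      have hexp : HasDerivAt (fun t : ℝ => Complex.exp (-(s * t)))
          (Complex.exp (-(s * t)) * -s) t := by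
        simpa using (((hasDerivAt_id (t : ℂ)).const_mul s).neg.cexp).comp_ofReal
      refine ((hpow.mul hexp).neg.div_const s).congr_deriv ?_
      field_simp
      ring
    have hibp := integral_Ioi_of_hasDerivAt_of_tendsto' hderiv
      ((integrableOn_ofReal_pow_mul_cexp_neg_mul_Ioi hs (l + 1)).sub
        ((integrableOn_ofReal_pow_mul_cexp_neg_mul_Ioi hs l).const_mul _))
      (by simpa using ((tendsto_ofReal_pow_mul_cexp_neg_mul_atTop hs (l + 1)).neg.div_const s))
    rw [integral_sub (integrableOn_ofReal_pow_mul_cexp_neg_mul_Ioi hs (l + 1))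
      ((integrableOn_ofReal_pow_mul_cexp_neg_mul_Ioi hs l).const_mul _), integral_const_mul, ih,
      sub_eq_iff_eq_add] at hibp
    simp only [Complex.ofReal_zero, zero_pow l.succ_ne_zero, zero_mul, neg_zero, zero_div,
      sub_self, zero_add] at hibp
    rw [hibp, Nat.factorial_succ]
    push_cast
    field_simp
    ring

end LaplaceMonomial

section SplitAtZero

variable {E : Type*} [NormedAddCommGroup E] {f : ℝ → E}

lemma integrableOn_Iic_of_integrableOn_Ioi_comp_neg
    (hf : IntegrableOn (fun t => f (-t)) (Ioi (0 : ℝ))) : IntegrableOn f (Iic 0) := by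
  rw [← (Measure.measurePreserving_neg (volume : Measure ℝ)).integrableOn_comp_preimage
    (Homeomorph.neg ℝ).measurableEmbedding, neg_preimage, neg_Iic, neg_zero]
  exact (integrableOn_Ici_iff_integrableOn_Ioi).mpr hf

lemma integrable_of_integrableOn_Ioi_of_comp_neg (hpos : IntegrableOn f (Ioi (0 : ℝ)))
    (hneg : IntegrableOn (fun t => f (-t)) (Ioi (0 : ℝ))) : Integrable f := by
  rw [← integrableOn_univ, ← Iic_union_Ioi (a := (0 : ℝ))]
  exact (integrableOn_Iic_of_integrableOn_Ioi_comp_neg hneg).union hpos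

lemma integral_eq_integral_Ioi_add_integral_Ioi_comp_neg [NormedSpace ℝ E]
    (hpos : IntegrableOn f (Ioi (0 : ℝ))) (hneg : IntegrableOn (fun t => f (-t)) (Ioi (0 : ℝ))) :
    ∫ t, f t = (∫ t in Ioi (0 : ℝ), f t) + ∫ t in Ioi (0 : ℝ), f (-t) := by
  rw [integral_comp_neg_Ioi, neg_zero, ← intervalIntegral.integral_Iic_add_Ioi
    (integrableOn_Iic_of_integrableOn_Ioi_comp_neg hneg) hpos]
  exact add_comm _ _

end SplitAtZero

def expNegAbsMulPow (c : ℝ) (l : ℕ) (t : ℝ) : ℝ := Real.exp (-(c * |t|)) * |t| ^ l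

section FourierExpNegAbsMulPow

variable {c : ℝ}

lemma cexp_mul_expNegAbsMulPow_of_nonneg {t : ℝ} (ht : 0 ≤ t) (u : ℝ) (l : ℕ) :
    Complex.exp (-(Complex.I * t * u)) * expNegAbsMulPow c l t
      = (t : ℂ) ^ l * Complex.exp (-((c + u * Complex.I) * t)) := by
  rw [expNegAbsMulPow, abs_of_nonneg ht,
    show -((c + u * Complex.I) * t) = -(Complex.I * t * u) + -(c * t) by ring, Complex.exp_add]
  push_cast
  ring

lemma cexp_mul_expNegAbsMulPow_neg (t u : ℝ) (l : ℕ) :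
    Complex.exp (-(Complex.I * (-t : ℝ) * u)) * expNegAbsMulPow c l (-t)
      = Complex.exp (-(Complex.I * t * (-u : ℝ))) * expNegAbsMulPow c l t := by
  simp [expNegAbsMulPow]

lemma integrableOn_Ioi_cexp_mul_expNegAbsMulPow (hc : 0 < c) (u : ℝ) (l : ℕ) :
    IntegrableOn (fun t : ℝ => Complex.exp (-(Complex.I * t * u)) * expNegAbsMulPow c l t)
      (Ioi (0 : ℝ)) :=
  (integrableOn_ofReal_pow_mul_cexp_neg_mul_Ioi (s := c + u * Complex.I) (by simpa) l).congr_fun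
    (fun _ ht => (cexp_mul_expNegAbsMulPow_of_nonneg (le_of_lt ht) u l).symm) measurableSet_Ioi

lemma setIntegral_Ioi_cexp_mul_expNegAbsMulPow (hc : 0 < c) (u : ℝ) (l : ℕ) :
    ∫ t in Ioi (0 : ℝ), Complex.exp (-(Complex.I * t * u)) * expNegAbsMulPow c l t
      = (l ! : ℂ) / (c + u * Complex.I) ^ (l + 1) := by
  rw [setIntegral_congr_fun measurableSet_Ioi
    (fun _ ht => cexp_mul_expNegAbsMulPow_of_nonneg (le_of_lt ht) u l)]
  exact integral_ofReal_pow_mul_cexp_neg_mul_Ioi (by simpa) l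

lemma integrable_cexp_mul_expNegAbsMulPow (hc : 0 < c) (u : ℝ) (l : ℕ) :
    Integrable (fun t : ℝ => Complex.exp (-(Complex.I * t * u)) * expNegAbsMulPow c l t) :=
  integrable_of_integrableOn_Ioi_of_comp_neg (integrableOn_Ioi_cexp_mul_expNegAbsMulPow hc u l)
    (by simpa only [cexp_mul_expNegAbsMulPow_neg] using
      integrableOn_Ioi_cexp_mul_expNegAbsMulPow hc (-u) l)

theorem integral_cexp_mul_expNegAbsMulPow (hc : 0 < c) (u : ℝ) (l : ℕ) :
    ∫ t : ℝ, Complex.exp (-(Complex.I * t * u)) * expNegAbsMulPow c l t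
      = (l ! : ℂ) / (c + u * Complex.I) ^ (l + 1) + (l ! : ℂ) / (c - u * Complex.I) ^ (l + 1) := by
  rw [integral_eq_integral_Ioi_add_integral_Ioi_comp_neg
      (integrableOn_Ioi_cexp_mul_expNegAbsMulPow hc u l)
      (by simpa only [cexp_mul_expNegAbsMulPow_neg] using
        integrableOn_Ioi_cexp_mul_expNegAbsMulPow hc (-u) l)]
  simp only [cexp_mul_expNegAbsMulPow_neg]
  rw [setIntegral_Ioi_cexp_mul_expNegAbsMulPow hc, setIntegral_Ioi_cexp_mul_expNegAbsMulPow hc]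
  push_cast
  ring

end FourierExpNegAbsMulPow

lemma phiXi_eq_sum (p : ℕ) (c : ℝ) :
    phiXi p c = fun t => (((-1) ^ p / (gammaP p * c ^ (2 * p - 1)) : ℝ) : ℂ)
      * ∑ l ∈ range p, ((cCoef p l * c ^ l : ℝ) : ℂ) * expNegAbsMulPow c l t := by
  funext t
  simp only [phiXi, phiTilde, expNegAbsMulPow, mul_sum]
  push_cast
  exact sum_congr rfl fun l _ => by ring

lemma integrable_phiXi (p : ℕ) {c : ℝ} (hc : 0 < c) : Integrable (phiXi p c) := by
  rw [phiXi_eq_sum]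
  refine (integrable_finsetSum _ fun l _ => Integrable.const_mul ?_ _).const_mul _
  simpa using integrable_cexp_mul_expNegAbsMulPow hc 0 l

theorem integral_cexp_mul_phiXi {c : ℝ} (hc : 0 < c) (q : ℕ) (u : ℝ) :
    ∫ t : ℝ, Complex.exp (-(Complex.I * t * u)) * phiXi (q + 1) c t
      = (-1) ^ (q + 1) / ((u : ℂ) ^ 2 + (c : ℂ) ^ 2) ^ (q + 1) := by
  simp only [phiXi_eq_sum, mul_left_comm (Complex.exp _)]
  rw [integral_const_mul]
  simp only [mul_sum, mul_left_comm (Complex.exp _)]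
  rw [integral_finsetSum _ fun l _ => (integrable_cexp_mul_expNegAbsMulPow hc u l).const_mul _]
  simp_rw [integral_const_mul, integral_cexp_mul_expNegAbsMulPow hc u]
  have hc₀ : (c : ℂ) ≠ 0 := Complex.ofReal_ne_zero.mpr hc.ne'
  have hplus : (c : ℂ) + u * Complex.I ≠ 0 :=
    fun h => hc.ne' (by simpa using congrArg Complex.re h)
  have hminus : (c : ℂ) - u * Complex.I ≠ 0 :=
    fun h => hc.ne' (by simpa using congrArg Complex.re h)
  push_cast
  rw [sum_cCoef_mul_factorial_div_pow_add hplus hminus hc₀ (by ring),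
    show 2 * (q + 1) - 1 = 2 * q + 1 by omega]
  have hγ : (gammaP (q + 1) : ℂ) ≠ 0 :=
    Complex.ofReal_ne_zero.mpr (by rw [gammaP_add_one]; positivity)
  rw [show ((c : ℂ) + u * Complex.I) * (c - u * Complex.I) = u ^ 2 + c ^ 2 by
    linear_combination (-(u : ℂ) ^ 2) * Complex.I_sq]
  field_simp

/-- **Lemma (Integrable fundamental solution of `L_ξ`).** For each nonzero `ξ ∈ ℝⁿ` and
integer `p ≥ 2`, the function `φ_ξ` is integrable on `ℝ` and its Fourier transform
satisfies `∫ e^{-itu} φ_ξ(t) dt = (-1)^p / (u² + |ξ|²)^p` for all `u ∈ ℝ`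
(i.e. `φ_ξ` is the integrable fundamental solution of `L_ξ = (d²/dt² - |ξ|²)^p`). -/
theorem phiXi_integrable_and_fourierTransform
    (n p : ℕ) (hp : 2 ≤ p)
    (ξ : EuclideanSpace ℝ (Fin n)) (hξ : ξ ≠ 0) :
    Integrable (phiXi p ‖ξ‖) volume ∧
    ∀ u : ℝ, ∫ t : ℝ, Complex.exp (-(Complex.I * t * u)) * phiXi p ‖ξ‖ t
      = (-1 : ℂ) ^ p / ((u : ℂ) ^ 2 + ((‖ξ‖ : ℝ) : ℂ) ^ 2) ^ p := by
  obtain ⟨q, rfl⟩ : ∃ q, p = q + 1 := ⟨p - 1, by omega⟩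
  have hc : 0 < ‖ξ‖ := norm_pos_iff.mpr hξ
  exact ⟨integrable_phiXi _ hc, integral_cexp_mul_phiXi hc q⟩
end
end

section
/- For every nonzero ξ ∈ ℝ^n and every j ∈ {0, ..., N}, the function L_{ξ,j}(t) = Σ_{k=0}^{N} a_{jk} φ̃_ξ(t − t_k), whose coefficients {a_{jk}} are the unique solution of the linear system L_{ξ,j}(t_j) = 1 and L_{ξ,j}(t_k) = 0 for k ≠ j (the system matrix being the positive definite matrix M_ξ = (φ̃_ξ(t_j − t_k))_{j,k}), is a natural L_ξ-spline on τ; consequently it is the Lagrange function for natural L_ξ-spline interpolation at the knot t_j. -/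
open MeasureTheory Finset

noncomputable section

/-!
Write `φ̃(t) = G_p(c|t|)` with `G_p(u) = e^{-u} Σ_{l<p} c_l u^l`. The coefficients `c_l` are such
that `G_p'(u) = -2u G_{p-1}(u)`; by Leibniz's rule the odd derivatives of `G_p` at `0` then vanish
up to order `2p - 3`, so the branches `G_p(ct)` (for `t ≥ 0`) and `G_p(-ct)` (for `t ≤ 0`) have the
same derivatives at `0` up to order `2p - 2` and glue to a `C^{2p-2}` function.

Away from the knots every translate `φ̃(t - τₖ)` is `e^{∓ct}` times a polynomial of degree `< p`.
On `e^{±ct} P(t)` the operator `d²/dt² - c²` acts as `P ↦ ±2c P' + P''`, which factors through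
`d/dt`, and `d/dt ∓ c` acts as `d/dt`; so `(d²/dt² - c²)^p` kills every such piece, and so does
`(d/dt ∓ c)^p` on the outer half-lines, where only one exponential occurs.
-/

open Polynomial Filter Topology
open scoped ContDiff

def expPoly (b : ℝ) (P : ℂ[X]) : ℝ → ℂ := fun t => Complex.exp (b * t) * P.eval (t : ℂ)

@[simp]
lemma expPoly_zero (b : ℝ) : expPoly b 0 = 0 := by
  funext t
  simp [expPoly]

lemma hasDerivAt_expPoly (b : ℝ) (P : ℂ[X]) (t : ℝ) :
    HasDerivAt (expPoly b P) (expPoly b ((b : ℂ) • P + derivative P) t) t := by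
  have hexp : HasDerivAt (fun t : ℝ => Complex.exp (b * t)) (Complex.exp (b * t) * b) t := by
    simpa using ((hasDerivAt_id (t : ℂ)).const_mul (b : ℂ)).cexp.comp_ofReal
  have hprod : HasDerivAt (expPoly b P) _ t := hexp.fun_mul (P.hasDerivAt (t : ℂ)).comp_ofReal
  convert hprod using 1
  simp only [expPoly, eval_add, eval_smul, smul_eq_mul]
  ring

lemma deriv_expPoly (b : ℝ) (P : ℂ[X]) :
    deriv (expPoly b P) = expPoly b ((b : ℂ) • P + derivative P) :=
  funext fun t => (hasDerivAt_expPoly b P t).deriv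

lemma dIter_expPoly_self (d : ℝ) (k : ℕ) (P : ℂ[X]) :
    DIter d k (expPoly d P) = expPoly d (derivative^[k] P) := by
  induction k generalizing P with
  | zero => rfl
  | succ k ih =>
    have hDOp : DOp d (expPoly d P) = expPoly d (derivative P) := by
      funext t
      simp only [DOp, deriv_expPoly, expPoly, eval_add, eval_smul, smul_eq_mul]
      ring
    rw [DIter, Function.iterate_succ_apply, hDOp, ← DIter, ih, Function.iterate_succ_apply]

lemma dIter_expPoly_self_eq_zero (d : ℝ) {p : ℕ} {P : ℂ[X]} (hP : P ∈ degreeLT ℂ p) :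
    DIter d p (expPoly d P) = 0 := by
  rw [dIter_expPoly_self, iterate_derivative_eq_zero_of_degree_lt (mem_degreeLT.mp hP),
    expPoly_zero]

def reducedL (b : ℝ) (P : ℂ[X]) : ℂ[X] := (2 * b : ℂ) • derivative P + derivative (derivative P)

lemma lOp_expPoly_pair (c : ℝ) (P Q : ℂ[X]) :
    LOp c (fun t => expPoly c P t + expPoly (-c) Q t)
      = fun t => expPoly c (reducedL c P) t + expPoly (-c) (reducedL (-c) Q) t := by
  have hd : ∀ (b : ℝ) (R : ℂ[X]) (t : ℝ), DifferentiableAt ℝ (expPoly b R) t :=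
    fun b R t => (hasDerivAt_expPoly b R t).differentiableAt
  have hderiv : ∀ R S : ℂ[X], deriv (fun t => expPoly c R t + expPoly (-c) S t)
      = fun t => expPoly c ((c : ℂ) • R + derivative R) t
          + expPoly (-c) (((-c : ℝ) : ℂ) • S + derivative S) t := fun R S =>
    funext fun t => by rw [deriv_fun_add (hd _ _ t) (hd _ _ t), deriv_expPoly, deriv_expPoly]
  funext t
  rw [LOp, iteratedDeriv_succ, iteratedDeriv_one, hderiv, hderiv]
  simp only [expPoly, reducedL, eval_add, eval_smul, derivative_add, derivative_smul, smul_eq_mul]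
  push_cast
  ring

lemma iterate_reducedL_eq_zero (b : ℝ) {p : ℕ} {P : ℂ[X]} (hP : P ∈ degreeLT ℂ p) :
    (reducedL b)^[p] P = 0 := by
  set A : ℂ[X] → ℂ[X] := fun Q => (2 * b : ℂ) • Q + derivative Q
  have hcomm : Function.Commute A derivative := fun Q => by
    simp only [A, derivative_add, derivative_smul]
  have hA : A 0 = 0 := by simp [A]
  change (A ∘ derivative)^[p] P = 0
  rw [hcomm.comp_iterate, Function.comp_apply,
    iterate_derivative_eq_zero_of_degree_lt (mem_degreeLT.mp hP), Function.iterate_fixed hA]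

lemma lIter_expPoly_pair (c : ℝ) (k : ℕ) (P Q : ℂ[X]) :
    LIter c k (fun t => expPoly c P t + expPoly (-c) Q t)
      = fun t => expPoly c ((reducedL c)^[k] P) t + expPoly (-c) ((reducedL (-c))^[k] Q) t := by
  induction k generalizing P Q with
  | zero => rfl
  | succ k ih =>
    rw [LIter, Function.iterate_succ_apply, lOp_expPoly_pair, ← LIter, ih]
    rfl

lemma lIter_expPoly_pair_eq_zero (c : ℝ) {p : ℕ} {P Q : ℂ[X]} (hP : P ∈ degreeLT ℂ p)
    (hQ : Q ∈ degreeLT ℂ p) : LIter c p (fun t => expPoly c P t + expPoly (-c) Q t) = 0 := by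
  rw [lIter_expPoly_pair, iterate_reducedL_eq_zero c hP, iterate_reducedL_eq_zero (-c) hQ]
  funext t
  simp

lemma Filter.EventuallyEq.iterate_of_congr {α β : Type*} {l : Filter α}
    {T : (α → β) → α → β} (hT : ∀ f g : α → β, f =ᶠ[l] g → T f =ᶠ[l] T g)
    {f g : α → β} (h : f =ᶠ[l] g) (k : ℕ) : T^[k] f =ᶠ[l] T^[k] g := by
  induction k generalizing f g with
  | zero => exact h
  | succ k ih => exact ih (hT f g h)

lemma Filter.EventuallyEq.dIter {f g : ℝ → ℂ} {x : ℝ} (h : f =ᶠ[𝓝 x] g) (c : ℝ) (k : ℕ) :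
    DIter c k f =ᶠ[𝓝 x] DIter c k g :=
  h.iterate_of_congr (fun _ _ h' => by
    filter_upwards [h'.deriv, h'] with t h1 h2
    simp only [DOp, h1, h2]) k

lemma Filter.EventuallyEq.lIter {f g : ℝ → ℂ} {x : ℝ} (h : f =ᶠ[𝓝 x] g) (c : ℝ) (k : ℕ) :
    LIter c k f =ᶠ[𝓝 x] LIter c k g :=
  h.iterate_of_congr (fun _ _ h' => by
    filter_upwards [h'.iteratedDeriv 2, h'] with t h1 h2
    simp only [LOp, h1, h2]) k

lemma cCoef_one (q : ℕ) : cCoef (q + 2) 1 = cCoef (q + 2) 0 := by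
  simp only [cCoef]
  rw [show 2 * (q + 2) - 2 - 1 = 2 * q + 1 by omega,
    show 2 * (q + 2) - 2 - 0 = 2 * q + 1 + 1 by omega, show q + 2 - 1 - 1 = q by omega,
    show q + 2 - 1 - 0 = q + 1 by omega,
    Nat.factorial_succ (2 * q + 1), Nat.factorial_succ q]
  push_cast
  field_simp
  ring

lemma cCoef_recurrence (i a : ℕ) :
    (i + 2 : ℝ) * cCoef (i + a + 3) (i + 2) - cCoef (i + a + 3) (i + 1)
      = -2 * cCoef (i + a + 2) i := by
  simp only [cCoef]
  rw [show 2 * (i + a + 3) - 2 - (i + 2) = i + 2 * a + 2 by omega,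
    show 2 * (i + a + 3) - 2 - (i + 1) = i + 2 * a + 2 + 1 by omega,
    show 2 * (i + a + 2) - 2 - i = i + 2 * a + 2 by omega,
    show i + a + 3 - 1 - (i + 2) = a by omega, show i + a + 3 - 1 - (i + 1) = a + 1 by omega,
    show i + a + 2 - 1 - i = a + 1 by omega,
    Nat.factorial_succ (i + 2 * a + 2), Nat.factorial_succ (i + 1), Nat.factorial_succ i,
    Nat.factorial_succ a]
  push_cast
  field_simp
  ring

lemma cCoef_last (i : ℕ) : cCoef (i + 2) (i + 1) = 2 * cCoef (i + 1) i := by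
  simp only [cCoef]
  rw [show 2 * (i + 2) - 2 - (i + 1) = i + 1 by omega, show 2 * (i + 1) - 2 - i = i by omega,
    show i + 2 - 1 - (i + 1) = 0 by omega, show i + 1 - 1 - i = 0 by omega, Nat.factorial_succ i]
  push_cast
  field_simp
  ring

def kernelPoly (p : ℕ) : ℝ[X] := ∑ l ∈ range p, C (cCoef p l) * X ^ l

lemma coeff_kernelPoly (p m : ℕ) : (kernelPoly p).coeff m = if m < p then cCoef p m else 0 := by
  simp [kernelPoly, coeff_C_mul, coeff_X_pow]

lemma derivative_kernelPoly_sub (p : ℕ) :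
    derivative (kernelPoly (p + 2)) - kernelPoly (p + 2) = -(C 2 * X * kernelPoly (p + 1)) := by
  ext m
  simp only [coeff_sub, coeff_derivative, coeff_neg, mul_assoc, coeff_C_mul, coeff_kernelPoly]
  rcases m with _ | i
  · simp [cCoef_one]
  rw [coeff_X_mul, coeff_kernelPoly]
  rcases lt_trichotomy i p with hi | rfl | hi
  · obtain ⟨a, rfl⟩ := Nat.exists_eq_add_of_lt hi
    rw [if_pos (by omega), if_pos (by omega), if_pos (by omega),
      show i + a + 1 + 2 = i + a + 3 by ring, show i + a + 1 + 1 = i + a + 2 by ring]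
    push_cast
    linarith [cCoef_recurrence i a]
  · rw [if_neg (by omega), if_pos (by omega), if_pos (by omega), cCoef_last]
    ring
  · rw [if_neg (by omega), if_neg (by omega), if_neg (by omega)]
    ring

def kernelProfile (p : ℕ) (u : ℝ) : ℝ := Real.exp (-u) * (kernelPoly p).eval u

lemma contDiff_kernelProfile (p : ℕ) : ContDiff ℝ ∞ (kernelProfile p) :=
  (Real.contDiff_exp.comp contDiff_neg).mul
    (by simpa using (kernelPoly p).contDiff_aeval (𝕜 := ℝ) ∞)

lemma deriv_kernelProfile (p : ℕ) :
    deriv (kernelProfile (p + 2)) = fun u => -2 * (u * kernelProfile (p + 1) u) := by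
  funext u
  have hexp : HasDerivAt (fun u : ℝ => Real.exp (-u)) (-Real.exp (-u)) u := by
    simpa using (hasDerivAt_neg u).exp
  have hderiv : HasDerivAt (kernelProfile (p + 2)) _ u :=
    hexp.fun_mul ((kernelPoly (p + 2)).hasDerivAt u)
  rw [hderiv.deriv]
  have hcoeff := congrArg (eval u) (derivative_kernelPoly_sub p)
  simp only [eval_sub, eval_neg, eval_mul, eval_C, eval_X] at hcoeff
  simp only [kernelProfile]
  linear_combination Real.exp (-u) * hcoeff

lemma iteratedDeriv_succ_id_mul_zero (n : ℕ) {f : ℝ → ℝ} (hf : ContDiffAt ℝ (n + 1 : ℕ) f 0) :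
    iteratedDeriv (n + 1) (fun x => x * f x) 0 = (n + 1) * iteratedDeriv n f 0 := by
  rw [iteratedDeriv_fun_mul (f := fun x => x) contDiff_id.contDiffAt hf,
    Finset.sum_eq_single 1]
  · simp [iteratedDeriv_fun_id_zero]
  · intro i _ hi
    simp [iteratedDeriv_fun_id_zero, hi]
  · simp

lemma iteratedDeriv_kernelProfile_zero_of_odd {k p : ℕ} (hk : Odd k) (hkp : k + 3 ≤ 2 * p) :
    iteratedDeriv k (kernelProfile p) 0 = 0 := by
  induction k using Nat.strong_induction_on generalizing p with
  | _ k ih =>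
    obtain ⟨m, rfl⟩ := hk
    obtain ⟨q, rfl⟩ : ∃ q, p = q + 2 := ⟨p - 2, by omega⟩
    rw [iteratedDeriv_succ', deriv_kernelProfile, iteratedDeriv_const_mul_field]
    rcases m with _ | m
    · simp
    rw [show 2 * (m + 1) = 2 * m + 1 + 1 by ring,
      iteratedDeriv_succ_id_mul_zero _
        (contDiff_infty.mp (contDiff_kernelProfile _) _).contDiffAt,
      ih (2 * m + 1) (by omega) ⟨m, rfl⟩ (by omega)]
    ring

section Gluing

variable {F : Type*} [NormedAddCommGroup F] [NormedSpace ℝ F]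

lemma hasDerivAt_ite_le {f g : ℝ → F} {a : ℝ} (hf : Differentiable ℝ f)
    (hg : Differentiable ℝ g) (h0 : f a = g a) (h1 : deriv f a = deriv g a) (x : ℝ) :
    HasDerivAt (fun t => if a ≤ t then f t else g t)
      (if a ≤ x then deriv f x else deriv g x) x := by
  rcases lt_trichotomy x a with hx | rfl | hx
  · rw [if_neg hx.not_ge]
    refine (hg x).hasDerivAt.congr_of_eventuallyEq ?_
    filter_upwards [Iio_mem_nhds hx] with t ht
    exact if_neg ht.not_ge
  · rw [if_pos le_rfl]
    have hright : HasDerivWithinAt (fun t => if x ≤ t then f t else g t) (deriv f x)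
        (Set.Ici x) x :=
      (hf x).hasDerivAt.hasDerivWithinAt.congr (fun t ht => if_pos ht) (if_pos le_rfl)
    have hleft : HasDerivWithinAt (fun t => if x ≤ t then f t else g t) (deriv f x)
        (Set.Iic x) x := by
      rw [h1]
      refine (hg x).hasDerivAt.hasDerivWithinAt.congr (fun t ht => ?_) (by simp [h0])
      rcases (Set.mem_Iic.mp ht).lt_or_eq with ht | rfl
      · exact if_neg ht.not_ge
      · simp [h0]
    simpa [Set.Iic_union_Ici] using hleft.union hright
  · rw [if_pos hx.le]
    refine (hf x).hasDerivAt.congr_of_eventuallyEq ?_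
    filter_upwards [Ioi_mem_nhds hx] with t ht
    exact if_pos ht.le

theorem contDiff_ite_le_of_iteratedDeriv_eq {f g : ℝ → F} {a : ℝ} (hf : ContDiff ℝ ∞ f)
    (hg : ContDiff ℝ ∞ g) {n : ℕ} (hfg : ∀ k ≤ n, iteratedDeriv k f a = iteratedDeriv k g a) :
    ContDiff ℝ n (fun t => if a ≤ t then f t else g t) := by
  induction n generalizing f g with
  | zero =>
    have h0 : f a = g a := by simpa using hfg 0 le_rfl
    exact contDiff_zero.mpr (hf.continuous.if_le hg.continuous continuous_const continuous_id
      fun x hx => by rw [← hx, h0])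
  | succ n ih =>
    have h0 : f a = g a := by simpa using hfg 0 (by omega)
    have h1 : deriv f a = deriv g a := by simpa using hfg 1 (by omega)
    have hderiv := hasDerivAt_ite_le (hf.differentiable (by simp))
      (hg.differentiable (by simp)) h0 h1
    rw [Nat.cast_succ, contDiff_succ_iff_deriv]
    refine ⟨fun x => (hderiv x).differentiableAt, by simp, ?_⟩
    rw [show deriv _ = _ from funext fun x => (hderiv x).deriv]
    exact ih (contDiff_infty_iff_deriv.mp hf).2 (contDiff_infty_iff_deriv.mp hg).2
      fun k hk => by simpa only [iteratedDeriv_succ'] using hfg (k + 1) (by omega)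

end Gluing

lemma phiTilde_eq_kernelProfile {p : ℕ} {c d x : ℝ} (h : d * x = c * |x|) :
    phiTilde p c x = kernelProfile p (d * x) := by
  rw [h]
  simp only [phiTilde, kernelProfile, kernelPoly, eval_finsetSum, eval_mul, eval_C, eval_pow,
    eval_X, mul_pow, mul_assoc]

lemma contDiff_phiTilde (p : ℕ) (c : ℝ) : ContDiff ℝ (2 * p - 2 : ℕ) (phiTilde p c) := by
  have hpiece : phiTilde p c =
      fun t => if 0 ≤ t then kernelProfile p (c * t) else kernelProfile p (-c * t) := by
    funext t
    split_ifs with ht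
    · exact phiTilde_eq_kernelProfile (by rw [abs_of_nonneg ht])
    · exact phiTilde_eq_kernelProfile (by rw [abs_of_neg (not_le.mp ht)]; ring)
  have hsmooth := contDiff_kernelProfile p
  rw [hpiece]
  refine contDiff_ite_le_of_iteratedDeriv_eq (f := fun t => kernelProfile p (c * t))
    (g := fun t => kernelProfile p (-c * t)) (hsmooth.comp (contDiff_const.mul contDiff_id))
    (hsmooth.comp (contDiff_const.mul contDiff_id)) fun k hk => ?_
  have hk_smooth : ContDiff ℝ k (kernelProfile p) := contDiff_infty.mp hsmooth k
  simp only [iteratedDeriv_comp_const_mul hk_smooth, mul_zero]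
  rcases k.even_or_odd with hk_even | hk_odd
  · rw [hk_even.neg_pow]
  · rw [iteratedDeriv_kernelProfile_zero_of_odd hk_odd (by obtain ⟨m, rfl⟩ := hk_odd; omega),
      mul_zero, mul_zero]

def shiftPoly (p : ℕ) (d s : ℝ) : ℂ[X] :=
  ∑ l ∈ range p, C ((Real.exp (d * s) * cCoef p l * d ^ l : ℝ) : ℂ) * (X - C (s : ℂ)) ^ l

lemma shiftPoly_mem_degreeLT (p : ℕ) (d s : ℝ) : shiftPoly p d s ∈ degreeLT ℂ p := by
  refine Submodule.sum_mem _ fun l hl => mem_degreeLT.mpr ?_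
  calc degree (C _ * (X - C (s : ℂ)) ^ l) ≤ l := by compute_degree!
    _ < p := by exact_mod_cast mem_range.mp hl

lemma kernelProfile_mul_sub_eq_expPoly (p : ℕ) (d s t : ℝ) :
    (kernelProfile p (d * (t - s)) : ℂ) = expPoly (-d) (shiftPoly p d s) t := by
  have hexp : Complex.exp (-(d * (t - s))) = Complex.exp (-d * t) * Complex.exp (d * s) := by
    rw [← Complex.exp_add]
    ring_nf
  simp only [kernelProfile, kernelPoly, expPoly, shiftPoly, eval_finsetSum, eval_mul, eval_C,
    eval_pow, eval_sub, eval_X, mul_pow]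
  push_cast
  simp only [hexp, Finset.mul_sum]
  refine Finset.sum_congr rfl fun l _ => ?_
  ring

lemma phiTilde_sub_eq_expPoly_of_le {p : ℕ} {c s t : ℝ} (h : t ≤ s) :
    (phiTilde p c (t - s) : ℂ) = expPoly c (shiftPoly p (-c) s) t := by
  rw [phiTilde_eq_kernelProfile (d := -c) (by rw [abs_of_nonpos (by linarith)]; ring),
    kernelProfile_mul_sub_eq_expPoly, neg_neg]

lemma phiTilde_sub_eq_expPoly_of_ge {p : ℕ} {c s t : ℝ} (h : s ≤ t) :
    (phiTilde p c (t - s) : ℂ) = expPoly (-c) (shiftPoly p c s) t := by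
  rw [phiTilde_eq_kernelProfile (d := c) (by rw [abs_of_nonneg (by linarith)]),
    kernelProfile_mul_sub_eq_expPoly]

section RBFSum

variable {ι : Type*}

def knotPoly (p : ℕ) (τ a : ι → ℝ) (d : ℝ) (S : Finset ι) : ℂ[X] :=
  ∑ k ∈ S, (a k : ℂ) • shiftPoly p d (τ k)

def rbfSum [Fintype ι] (p : ℕ) (c : ℝ) (τ a : ι → ℝ) : ℝ → ℂ :=
  fun t => ((∑ k, a k * phiTilde p c (t - τ k) : ℝ) : ℂ)

variable {p : ℕ} {c : ℝ} {τ a : ι → ℝ}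

lemma knotPoly_mem_degreeLT (d : ℝ) (S : Finset ι) : knotPoly p τ a d S ∈ degreeLT ℂ p :=
  Submodule.sum_mem _ fun k _ => Submodule.smul_mem _ _ (shiftPoly_mem_degreeLT p d (τ k))

lemma expPoly_knotPoly (b d : ℝ) (S : Finset ι) (t : ℝ) :
    expPoly b (knotPoly p τ a d S) t = ∑ k ∈ S, (a k : ℂ) * expPoly b (shiftPoly p d (τ k)) t := by
  simp only [expPoly, knotPoly, eval_finsetSum, eval_smul, smul_eq_mul, Finset.mul_sum]
  exact Finset.sum_congr rfl fun k _ => by ring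

@[simp]
lemma knotPoly_empty (d : ℝ) : knotPoly p τ a d ∅ = 0 := Finset.sum_empty

variable [Fintype ι]

lemma contDiff_rbfSum : ContDiff ℝ (2 * p - 2 : ℕ) (rbfSum p c τ a) :=
  Complex.ofRealCLM.contDiff.comp <| ContDiff.sum fun _ _ =>
    contDiff_const.mul ((contDiff_phiTilde p c).comp (contDiff_id.sub contDiff_const))

lemma rbfSum_eventuallyEq_expPoly {x : ℝ} (hx : ∀ k, τ k ≠ x) :
    rbfSum p c τ a =ᶠ[𝓝 x] fun t => expPoly c (knotPoly p τ a (-c) {k | x < τ k}) t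
      + expPoly (-c) (knotPoly p τ a c {k | τ k < x}) t := by
  have hside : ∀ᶠ t in 𝓝 x, ∀ k, (x < τ k → t ≤ τ k) ∧ (τ k < x → τ k ≤ t) :=
    eventually_all.mpr fun k => by
      rcases (hx k).lt_or_gt with hk | hk
      · filter_upwards [eventually_gt_nhds hk] with t ht
        exact ⟨fun h => absurd h hk.not_gt, fun _ => ht.le⟩
      · filter_upwards [eventually_lt_nhds hk] with t ht
        exact ⟨fun _ => ht.le, fun h => absurd h hk.not_gt⟩
  have hfilter : (univ.filter fun k => ¬ x < τ k) = univ.filter fun k => τ k < x :=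
    Finset.filter_congr fun k _ => by simpa using (hx k).le_iff_lt
  filter_upwards [hside] with t ht
  simp only [rbfSum, expPoly_knotPoly]
  push_cast
  rw [← Finset.sum_filter_add_sum_filter_not _ (fun k => x < τ k), hfilter]
  congr 1 <;> refine Finset.sum_congr rfl fun k hk => ?_ <;> rw [Finset.mem_filter] at hk
  · rw [phiTilde_sub_eq_expPoly_of_le ((ht k).1 hk.2)]
  · rw [phiTilde_sub_eq_expPoly_of_ge ((ht k).2 hk.2)]

lemma lIter_rbfSum_eq_zero {x : ℝ} (hx : ∀ k, τ k ≠ x) : LIter c p (rbfSum p c τ a) x = 0 := by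
  rw [((rbfSum_eventuallyEq_expPoly hx).lIter c p).eq_of_nhds,
    lIter_expPoly_pair_eq_zero c (knotPoly_mem_degreeLT _ _) (knotPoly_mem_degreeLT _ _)]
  rfl

lemma dIter_rbfSum_eq_zero_of_lt {x : ℝ} (hx : ∀ k, x < τ k) :
    DIter c p (rbfSum p c τ a) x = 0 := by
  have h := rbfSum_eventuallyEq_expPoly (p := p) (c := c) (a := a) fun k => (hx k).ne'
  have hempty : ({k | τ k < x} : Finset ι) = ∅ :=
    Finset.filter_false_of_mem fun k _ => (hx k).not_gt
  simp only [hempty, knotPoly_empty, expPoly_zero, Pi.zero_apply, add_zero] at h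
  rw [(h.dIter c p).eq_of_nhds]
  exact congrFun (dIter_expPoly_self_eq_zero c (knotPoly_mem_degreeLT _ _)) x

lemma dIter_neg_rbfSum_eq_zero_of_gt {x : ℝ} (hx : ∀ k, τ k < x) :
    DIter (-c) p (rbfSum p c τ a) x = 0 := by
  have h := rbfSum_eventuallyEq_expPoly (p := p) (c := c) (a := a) fun k => (hx k).ne
  have hempty : ({k | x < τ k} : Finset ι) = ∅ :=
    Finset.filter_false_of_mem fun k _ => (hx k).not_gt
  simp only [hempty, knotPoly_empty, expPoly_zero, Pi.zero_apply, zero_add] at h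
  rw [(h.dIter (-c) p).eq_of_nhds]
  exact congrFun (dIter_expPoly_self_eq_zero (-c) (knotPoly_mem_degreeLT _ _)) x

end RBFSum

lemma StrictMono.ne_of_mem_Ioo_castSucc_succ {N : ℕ} {τ : Fin (N + 1) → ℝ} (hτ : StrictMono τ)
    {i : Fin N} {x : ℝ} (hx : x ∈ Set.Ioo (τ i.castSucc) (τ i.succ)) (k : Fin (N + 1)) :
    τ k ≠ x := by
  rintro rfl
  exact (hτ.lt_iff_lt.mp hx.2).not_ge (Fin.castSucc_lt_iff_succ_le.mp (hτ.lt_iff_lt.mp hx.1))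

theorem rbf_representation_is_lagrange_function_general
    (n p N : ℕ)
    (ξ : EuclideanSpace ℝ (Fin n))
    (τ : Fin (N + 1) → ℝ) (hτ : StrictMono τ)
    (j : Fin (N + 1)) (a : Fin (N + 1) → ℝ)
    (ha : ∀ k, ∑ l : Fin (N + 1), a l * phiTilde p ‖ξ‖ (τ k - τ l) = if k = j then 1 else 0) :
    IsNaturalLSpline p N ‖ξ‖ τ
      (fun t => ((∑ k : Fin (N + 1), a k * phiTilde p ‖ξ‖ (t - τ k) : ℝ) : ℂ)) ∧
    ∀ k, ((∑ l : Fin (N + 1), a l * phiTilde p ‖ξ‖ (τ k - τ l) : ℝ) : ℂ)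
      = if k = j then 1 else 0 := by
  have hleft : ∀ x ∈ Set.Iio (τ 0), ∀ k, x < τ k :=
    fun x hx k => lt_of_lt_of_le hx (hτ.monotone (Fin.zero_le k))
  have hright : ∀ x ∈ Set.Ioi (τ (Fin.last N)), ∀ k, τ k < x :=
    fun x hx k => lt_of_le_of_lt (hτ.monotone (Fin.le_last k)) hx
  refine ⟨⟨contDiff_rbfSum,
    fun i x hx => lIter_rbfSum_eq_zero (hτ.ne_of_mem_Ioo_castSucc_succ hx),
    fun x hx => lIter_rbfSum_eq_zero fun k => (hleft x hx k).ne',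
    fun x hx => lIter_rbfSum_eq_zero fun k => (hright x hx k).ne,
    fun x hx => dIter_rbfSum_eq_zero_of_lt (hleft x hx),
    fun x hx => dIter_neg_rbfSum_eq_zero_of_gt (hright x hx)⟩, fun k => ?_⟩
  rw [ha k]
  split_ifs <;> simp

/-- **Lemma (RBF representation of the Lagrange functions).** For every nonzero `ξ ∈ ℝⁿ`
and every `j ∈ {0, ..., N}`, if the coefficients `a k` solve the interpolation system
`Σ_k a k φ̃_ξ(τ j' - τ k) = δ_{j j'}`, then the function
`t ↦ Σ_k a k φ̃_ξ(t - τ k)` is a natural `L_ξ`-spline on `τ`; consequently it is the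
Lagrange function for natural `L_ξ`-spline interpolation at the knot `τ j` (it takes the
value `1` at `τ j` and `0` at the other knots). -/
theorem rbf_representation_is_lagrange_function
    (n p N : ℕ) (hp : 2 ≤ p) (hN : p ≤ N + 1)
    (ξ : EuclideanSpace ℝ (Fin n)) (hξ : ξ ≠ 0)
    (τ : Fin (N + 1) → ℝ) (hτ : StrictMono τ)
    (j : Fin (N + 1)) (a : Fin (N + 1) → ℝ)
    (ha : ∀ k, ∑ l : Fin (N + 1), a l * phiTilde p ‖ξ‖ (τ k - τ l) = if k = j then 1 else 0) :
    IsNaturalLSpline p N ‖ξ‖ τ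
      (fun t => ((∑ k : Fin (N + 1), a k * phiTilde p ‖ξ‖ (t - τ k) : ℝ) : ℂ)) ∧
    ∀ k, ((∑ l : Fin (N + 1), a l * phiTilde p ‖ξ‖ (τ k - τ l) : ℝ) : ℂ)
      = if k = j then 1 else 0 :=
  rbf_representation_is_lagrange_function_general n p N ξ τ hτ j a ha
end
end

section
/- There exists a constant μ = μ(p, τ) > 0 such that for every ξ ∈ ℝ^n with |ξ| ≥ μ, every eigenvalue λ of the matrix M_ξ = (φ̃_ξ(t_j − t_k))_{j,k=0}^{N} satisfies λ ≥ c_0 / 2, where c_0 = (2p−2)!/(p−1)!. -/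
/-!
The diagonal entries of `M_ξ` all equal `φ̃_ξ(0) = c₀`, while each off-diagonal entry
`φ̃_ξ(t_j - t_k)` has `t_j ≠ t_k` and is a polynomial in `|ξ|` times `e^{-|ξ||t_j - t_k|}`,
so it tends to `0` as `|ξ| → ∞`. For `|ξ|` large the Gershgorin discs of `M_ξ` therefore
lie in `[c₀/2, 3c₀/2]`.
-/

open MeasureTheory Finset

noncomputable section

open Filter Topology

theorem Matrix.sub_le_of_mulVec_eq_smul {ι : Type*} [Fintype ι] [DecidableEq ι]
    {A : Matrix ι ι ℝ} {d r lam : ℝ} {v : ι → ℝ} (hdiag : ∀ k, d ≤ A k k)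
    (hoff : ∀ k, ∑ j ∈ univ.erase k, ‖A k j‖ ≤ r) (hv : v ≠ 0)
    (hAv : A.mulVec v = lam • v) :
    d - r ≤ lam := by
  have hlam : Module.End.HasEigenvalue (Matrix.toLin' A) lam :=
    Module.End.hasEigenvalue_of_hasEigenvector
      ⟨Module.End.mem_eigenspace_iff.2 (by rwa [Matrix.toLin'_apply]), hv⟩
  obtain ⟨k, hk⟩ := eigenvalue_mem_ball hlam
  rw [Metric.mem_closedBall, Real.dist_eq] at hk
  linarith [neg_abs_le (lam - A k k), hdiag k, hoff k]

lemma phiTilde_zero {p : ℕ} (hp : 1 ≤ p) (c : ℝ) :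
    phiTilde p c 0 = ((2 * p - 2).factorial : ℝ) / ((p - 1).factorial : ℝ) := by
  rw [phiTilde, abs_zero, mul_zero, neg_zero, Real.exp_zero, one_mul,
    Finset.sum_eq_single_of_mem 0 (Finset.mem_range.mpr hp)]
  · simp [cCoef]
  · intro l _ hl
    simp [zero_pow hl]

lemma phiTilde_eq_sum (p : ℕ) (c t : ℝ) :
    phiTilde p c t =
      ∑ l ∈ range p, cCoef p l * ((c * |t|) ^ l * Real.exp (-(c * |t|))) := by
  rw [phiTilde, Finset.mul_sum]
  refine Finset.sum_congr rfl fun l _ => ?_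
  rw [mul_pow]
  ring

lemma tendsto_phiTilde_atTop (p : ℕ) {t : ℝ} (ht : t ≠ 0) :
    Tendsto (fun c => phiTilde p c t) atTop (𝓝 0) := by
  have hscale : Tendsto (fun c : ℝ => c * |t|) atTop atTop :=
    tendsto_id.atTop_mul_const (abs_pos.2 ht)
  simp_rw [phiTilde_eq_sum]
  simpa using tendsto_finsetSum (range p) fun l _ =>
    ((Real.tendsto_pow_mul_exp_neg_atTop_nhds_zero l).comp hscale).const_mul (cCoef p l)

/-- **Lemma (Eigenvalue lower bound for large `|ξ|`).** There is a constant
`μ = μ(p, τ) > 0` such that for every `ξ ∈ ℝⁿ` with `|ξ| ≥ μ`, every eigenvalue `λ` of the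
matrix `M_ξ = (φ̃_ξ(τ j - τ k))_{j,k}` satisfies `λ ≥ c₀ / 2`, where
`c₀ = (2p-2)!/(p-1)!`. -/
theorem eigenvalue_lower_bound
    (n p N : ℕ) (hp : 2 ≤ p)
    (τ : Fin (N + 1) → ℝ) (hτ : StrictMono τ) :
    ∃ μ > (0 : ℝ), ∀ ξ : EuclideanSpace ℝ (Fin n), μ ≤ ‖ξ‖ →
      ∀ (lam : ℝ) (v : Fin (N + 1) → ℝ), v ≠ 0 →
        (Matrix.of fun j k => phiTilde p ‖ξ‖ (τ j - τ k)).mulVec v = lam • v →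
        ((2 * p - 2).factorial : ℝ) / ((p - 1).factorial : ℝ) / 2 ≤ lam := by
  set c₀ : ℝ := ((2 * p - 2).factorial : ℝ) / ((p - 1).factorial : ℝ)
  have hc₀ : 0 < c₀ := by positivity
  have hoff : ∀ᶠ c in atTop, ∀ k,
      ∑ j ∈ univ.erase k, ‖phiTilde p c (τ k - τ j)‖ < c₀ / 2 :=
    eventually_all.2 fun k => Tendsto.eventually_lt_const (half_pos hc₀) <| by
      simpa only [norm_zero, sum_const_zero] using
        tendsto_finsetSum (univ.erase k) fun j hj => (tendsto_phiTilde_atTop p (sub_ne_zero.2 <|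
          hτ.injective.ne (ne_of_mem_erase hj).symm)).norm
  obtain ⟨μ, hμ⟩ := eventually_atTop.1 hoff
  refine ⟨max μ 1, by positivity, fun ξ hξ lam v hv hMv => ?_⟩
  have := Matrix.sub_le_of_mulVec_eq_smul (d := c₀) (r := c₀ / 2)
    (fun k => by simp [c₀, phiTilde_zero (by omega : 1 ≤ p)])
    (fun k => by simpa using (hμ ‖ξ‖ (le_of_max_le_left hξ) k).le) hv hMv
  linarith
end
end
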